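/- arXiv:1403.5927 — 2 statements merged into one kernel-verified Lean document; each statement's English description precedes it below -/
import Mathlib

section
/- A Binomial(N, p) random variable is stochastically dominated by a Poisson random variable with parameter -N·log(1-p), for any N ∈ ℕ and p ∈ [0,1). -/
open Finset

namespace BinPois

/-- Convolution of two mass functions on ℕ. -/
noncomputable def conv (f g : ℕ → ℝ) : ℕ → ℝ := fun n => ∑ i ∈ range (n + 1), f i * g (n - i)

/-- Partial sum (CDF) of a mass function on ℕ. -/
noncomputable def cdf (f : ℕ → ℝ) (k : ℕ) : ℝ := ∑ j ∈ range (k + 1), f j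

noncomputable def bern (p : ℝ) : ℕ → ℝ := fun n =>
  if n = 0 then 1 - p else if n = 1 then p else 0

noncomputable def binom (p : ℝ) (N : ℕ) : ℕ → ℝ := fun j =>
  (N.choose j : ℝ) * p ^ j * (1 - p) ^ (N - j)

noncomputable def pois (μ : ℝ) : ℕ → ℝ := fun j =>
  Real.exp (-μ) * μ ^ j / (Nat.factorial j : ℝ)

lemma cdf_conv (f g : ℕ → ℝ) (k : ℕ) :
    cdf (conv f g) k = ∑ i ∈ range (k + 1), f i * cdf g (k - i) := by
  induction k with
  | zero => simp [cdf, conv]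
  | succ k ih =>
    have h1 : cdf (conv f g) (k + 1) = cdf (conv f g) k + conv f g (k + 1) := by
      simp [cdf, Finset.sum_range_succ]
    rw [h1, ih]
    rw [Finset.sum_range_succ (fun i => f i * cdf g (k + 1 - i)) (k + 1)]
    have h2 : ∀ i ∈ range (k + 1), f i * cdf g (k + 1 - i)
        = f i * cdf g (k - i) + f i * g (k + 1 - i) := by
      intro i hi
      have hik : i ≤ k := by simpa using Nat.lt_succ_iff.mp (mem_range.mp hi)
      have : k + 1 - i = (k - i) + 1 := by omega
      rw [this]
      simp [cdf, Finset.sum_range_succ, mul_add]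
    rw [Finset.sum_congr rfl h2, Finset.sum_add_distrib]
    have h3 : conv f g (k + 1)
        = ∑ i ∈ range (k + 1), f i * g (k + 1 - i) + f (k + 1) * g 0 := by
      simp [conv, Finset.sum_range_succ]
    rw [h3]
    have : cdf g (k + 1 - (k + 1)) = g 0 := by simp [cdf]
    rw [this]
    ring

/-- Abel summation. -/
lemma abel (f h : ℕ → ℝ) (k : ℕ) :
    ∑ i ∈ range (k + 1), f i * h i
      = cdf f k * h k + ∑ i ∈ range k, cdf f i * (h i - h (i + 1)) := by
  induction k with
  | zero => simp [cdf]
  | succ k ih =>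
    rw [Finset.sum_range_succ (fun i => f i * h i) (k + 1), ih,
      Finset.sum_range_succ (fun i => cdf f i * (h i - h (i + 1))) k]
    have : cdf f (k + 1) = cdf f k + f (k + 1) := by
      simp [cdf, Finset.sum_range_succ]
    rw [this]
    ring

lemma sum_mul_le_sum_mul (f f' h : ℕ → ℝ) (k : ℕ)
    (hcdf : ∀ i, cdf f' i ≤ cdf f i)
    (hanti : ∀ i, h (i + 1) ≤ h i) (hk : 0 ≤ h k) :
    ∑ i ∈ range (k + 1), f' i * h i ≤ ∑ i ∈ range (k + 1), f i * h i := by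
  rw [abel f h k, abel f' h k]
  gcongr with i hi
  · exact hcdf k
  · exact sub_nonneg.mpr (hanti i)
  · exact hcdf i

lemma bern_nonneg {p : ℝ} (hp : 0 ≤ p) (hp1 : p ≤ 1) (n : ℕ) : 0 ≤ bern p n := by
  unfold bern; split_ifs <;> linarith

lemma binom_nonneg {p : ℝ} (hp : 0 ≤ p) (hp1 : p ≤ 1) (N j : ℕ) : 0 ≤ binom p N j := by
  unfold binom
  have : (0:ℝ) ≤ 1 - p := by linarith
  positivity

lemma pois_nonneg {μ : ℝ} (hμ : 0 ≤ μ) (j : ℕ) : 0 ≤ pois μ j := by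
  unfold pois; positivity

lemma cdf_mono {f : ℕ → ℝ} (hf : ∀ j, 0 ≤ f j) {a b : ℕ} (hab : a ≤ b) :
    cdf f a ≤ cdf f b := by
  unfold cdf
  apply Finset.sum_le_sum_of_subset_of_nonneg
  · exact Finset.range_subset_range.mpr (by omega)
  · intro i _ _; exact hf i

lemma cdf_nonneg {f : ℕ → ℝ} (hf : ∀ j, 0 ≤ f j) (k : ℕ) : 0 ≤ cdf f k :=
  Finset.sum_nonneg fun i _ => hf i

lemma summable_pois (μ : ℝ) : Summable (pois μ) := by
  unfold pois
  simpa [mul_div_assoc] using (Real.summable_pow_div_factorial μ).mul_left (Real.exp (-μ))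

lemma tsum_pois (μ : ℝ) : ∑' j, pois μ j = 1 := by
  unfold pois
  have h : ∑' j : ℕ, μ ^ j / (Nat.factorial j : ℝ) = Real.exp μ := by
    rw [Real.exp_eq_exp_ℝ, NormedSpace.exp_eq_tsum_div]
  calc ∑' j : ℕ, Real.exp (-μ) * μ ^ j / (Nat.factorial j : ℝ)
      = Real.exp (-μ) * ∑' j : ℕ, μ ^ j / (Nat.factorial j : ℝ) := by
        rw [← tsum_mul_left]; simp [mul_div_assoc]
    _ = 1 := by rw [h, ← Real.exp_add]; simp

lemma cdf_pois_le_one {μ : ℝ} (hμ : 0 ≤ μ) (k : ℕ) : cdf (pois μ) k ≤ 1 := by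
  rw [← tsum_pois μ]
  exact Summable.sum_le_tsum (range (k + 1)) (fun i _ => pois_nonneg hμ i) (summable_pois μ)

lemma conv_pois (a b : ℝ) : conv (pois a) (pois b) = pois (a + b) := by
  funext n
  unfold conv pois
  rw [add_pow, Finset.mul_sum, Finset.sum_div]
  apply Finset.sum_congr rfl
  intro i hi
  have hin : i ≤ n := Nat.lt_succ_iff.mp (mem_range.mp hi)
  have hfact : ((n.choose i : ℝ)) * (Nat.factorial i : ℝ) * (Nat.factorial (n - i) : ℝ)
      = (Nat.factorial n : ℝ) := by
    exact_mod_cast congrArg (Nat.cast (R := ℝ)) (Nat.choose_mul_factorial_mul_factorial hin)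
  have h1 : (Nat.factorial i : ℝ) ≠ 0 := by positivity
  have h2 : (Nat.factorial (n - i) : ℝ) ≠ 0 := by positivity
  have h3 : (Nat.factorial n : ℝ) ≠ 0 := by positivity
  have h4 : ((n.choose i : ℕ) : ℝ) ≠ 0 := by
    exact_mod_cast (Nat.choose_pos hin).ne'
  rw [neg_add, Real.exp_add, ← hfact]
  field_simp

lemma conv_bern_binom (p : ℝ) (N : ℕ) : conv (bern p) (binom p N) = binom p (N + 1) := by
  funext j
  match j with
  | 0 =>
    simp [conv, bern, binom, pow_succ]
    ring
  | (m + 1) =>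
    unfold conv
    rw [Finset.sum_range_succ' (fun i => bern p i * binom p N (m + 1 - i)) (m + 1),
      Finset.sum_range_succ' (fun i => bern p (i + 1) * binom p N (m + 1 - (i + 1))) m]
    have hz : ∀ i ∈ range m, bern p (i + 1 + 1) * binom p N (m + 1 - (i + 1 + 1)) = 0 := by
      intro i _; simp [bern]
    rw [Finset.sum_congr rfl hz]
    simp only [Finset.sum_const_zero, zero_add]
    have hb0 : bern p 0 = 1 - p := rfl
    have hb1 : bern p (0 + 1) = p := rfl
    rw [hb0, hb1]
    simp only [Nat.add_sub_cancel, Nat.sub_self]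
    unfold binom
    rcases lt_trichotomy (m + 1) (N + 1) with hlt | heq | hgt
    · have hm : m + 1 ≤ N := by omega
      have e1 : N - m = (N - (m + 1)) + 1 := by omega
      have e2 : N + 1 - (m + 1) = (N - (m + 1)) + 1 := by omega
      have e3 : (N + 1).choose (m + 1) = N.choose m + N.choose (m + 1) := by
        rw [Nat.choose_succ_succ]
      rw [e1, e2, e3]
      push_cast
      ring
    · have hm : m = N := by omega
      subst hm
      simp [Nat.choose_succ_self, Nat.choose_self, pow_succ]
      ring
    · have h1 : N.choose (m + 1) = 0 := Nat.choose_eq_zero_of_lt (by omega)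
      have h2 : N.choose m = 0 := Nat.choose_eq_zero_of_lt (by omega)
      have h3 : (N + 1).choose (m + 1) = 0 := Nat.choose_eq_zero_of_lt (by omega)
      simp [h1, h2, h3]

lemma cdf_bern_one {p : ℝ} (k : ℕ) (hk : 1 ≤ k) : cdf (bern p) k = 1 := by
  obtain ⟨m, rfl⟩ : ∃ m, k = m + 1 := ⟨k - 1, by omega⟩
  unfold cdf
  rw [Finset.sum_range_succ' (bern p) (m + 1),
    Finset.sum_range_succ' (fun i => bern p (i + 1)) m]
  have hz : ∀ i ∈ range m, bern p (i + 1 + 1) = 0 := by intro i _; simp [bern]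
  rw [Finset.sum_congr rfl hz]
  simp [bern]

lemma cdf_pois_le_bern {p : ℝ} (hp : 0 ≤ p) (hp1 : p < 1) (k : ℕ) :
    cdf (pois (-Real.log (1 - p))) k ≤ cdf (bern p) k := by
  have h1p : (0:ℝ) < 1 - p := by linarith
  have hμ : 0 ≤ -Real.log (1 - p) := by
    have := Real.log_nonpos (x := 1 - p) (by linarith) (by linarith)
    linarith
  rcases Nat.eq_zero_or_pos k with rfl | hk
  · have : cdf (pois (-Real.log (1 - p))) 0 = 1 - p := by
      simp [cdf, pois, Real.exp_log h1p]
    rw [this]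
    simp [cdf, bern]
  · rw [cdf_bern_one k hk]
    exact cdf_pois_le_one hμ k

lemma cdf_pois_le_binom {p : ℝ} (hp : 0 ≤ p) (hp1 : p < 1) (N : ℕ) (k : ℕ) :
    cdf (pois ((N : ℝ) * (-Real.log (1 - p)))) k ≤ cdf (binom p N) k := by
  have h1p : (0:ℝ) < 1 - p := by linarith
  have hμ : 0 ≤ -Real.log (1 - p) := by
    have := Real.log_nonpos (x := 1 - p) (by linarith) (by linarith)
    linarith
  induction N generalizing k with
  | zero =>
    have : pois ((0:ℕ) * (-Real.log (1 - p))) = binom p 0 := by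
      funext j
      match j with
      | 0 => simp [pois, binom]
      | (n + 1) => simp [pois, binom]
    rw [this]
  | succ N ih =>
    have hsplit : ((N + 1 : ℕ) : ℝ) * (-Real.log (1 - p))
        = (-Real.log (1 - p)) + (N : ℝ) * (-Real.log (1 - p)) := by push_cast; ring
    rw [hsplit, ← conv_pois, ← conv_bern_binom, cdf_conv, cdf_conv]
    calc ∑ i ∈ range (k + 1), pois (-Real.log (1 - p)) i
            * cdf (pois ((N : ℝ) * (-Real.log (1 - p)))) (k - i)
        ≤ ∑ i ∈ range (k + 1), pois (-Real.log (1 - p)) i * cdf (binom p N) (k - i) := by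
          apply Finset.sum_le_sum
          intro i _
          exact mul_le_mul_of_nonneg_left (ih (k - i)) (pois_nonneg hμ i)
      _ ≤ ∑ i ∈ range (k + 1), bern p i * cdf (binom p N) (k - i) := by
          apply sum_mul_le_sum_mul
          · exact cdf_pois_le_bern hp hp1
          · intro i
            exact cdf_mono (binom_nonneg hp hp1.le N) (by omega)
          · exact cdf_nonneg (binom_nonneg hp hp1.le N) _

lemma sum_binom_eq_one {p : ℝ} (N : ℕ) :
    ∑ j ∈ range (N + 1), binom p N j = 1 := by
  have h := add_pow p (1 - p) N
  have h1 : (p + (1 - p)) = (1:ℝ) := by ring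
  rw [h1, one_pow] at h
  rw [h]
  apply Finset.sum_congr rfl
  intro j _
  unfold binom
  ring

end BinPois

open BinPois in
/-- A Binomial(N, p) random variable is stochastically dominated by a Poisson random
variable with parameter `-N·log(1-p)`, for any `N ∈ ℕ` and `p ∈ [0,1)`: every tail
probability of the binomial is bounded by the corresponding Poisson tail probability. -/
theorem binomial_dominated_by_poisson (N : ℕ) (p : ℝ) (hp : 0 ≤ p) (hp1 : p < 1) (k : ℕ) :
    (∑ j ∈ Finset.range (N + 1),
        (if k < j then (N.choose j : ℝ) * p ^ j * (1 - p) ^ (N - j) else 0)) ≤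
      ∑' j : ℕ, (if k < j then
        Real.exp (-((N : ℝ) * (-Real.log (1 - p)))) * ((N : ℝ) * (-Real.log (1 - p))) ^ j
          / (Nat.factorial j) else 0) := by
  set μ : ℝ := -Real.log (1 - p) with hμdef
  have h1p : (0:ℝ) < 1 - p := by linarith
  have hμ : 0 ≤ μ := by
    have := Real.log_nonpos (x := 1 - p) (by linarith) (by linarith)
    simp only [hμdef]; linarith
  have hlam : 0 ≤ (N : ℝ) * μ := by positivity
  have hLHSdef : ∀ j, (if k < j then (N.choose j : ℝ) * p ^ j * (1 - p) ^ (N - j) else 0)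
      = (if k < j then binom p N j else 0) := fun j => rfl
  have hRHSdef : ∀ j : ℕ, (if k < j then
        Real.exp (-((N : ℝ) * μ)) * ((N : ℝ) * μ) ^ j / (Nat.factorial j : ℝ) else 0)
      = (if k < j then pois ((N : ℝ) * μ) j else 0) := fun j => rfl
  simp only [hLHSdef, hRHSdef]
  -- RHS rewriting
  have hsum2 : Summable (fun j => if k < j then (0:ℝ) else pois ((N : ℝ) * μ) j) := by
    apply summable_of_ne_finset_zero (s := Finset.range (k + 1))
    intro j hj
    rw [if_pos]
    simpa using hj
  have hsum1 : Summable (fun j => if k < j then pois ((N : ℝ) * μ) j else 0) := by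
    have : (fun j => if k < j then pois ((N : ℝ) * μ) j else 0)
        = (fun j => pois ((N : ℝ) * μ) j - (if k < j then 0 else pois ((N : ℝ) * μ) j)) := by
      funext j; split_ifs <;> simp
    rw [this]
    exact (summable_pois _).sub hsum2
  have htsum2 : ∑' j : ℕ, (if k < j then (0:ℝ) else pois ((N : ℝ) * μ) j)
      = cdf (pois ((N : ℝ) * μ)) k := by
    rw [tsum_eq_sum (s := Finset.range (k + 1)) (by intro j hj; rw [if_pos]; simpa using hj)]
    apply Finset.sum_congr rfl
    intro j hj
    rw [if_neg]
    simpa using Nat.lt_succ_iff.mp (Finset.mem_range.mp hj)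
  have hRHS : ∑' j : ℕ, (if k < j then pois ((N : ℝ) * μ) j else 0)
      = 1 - cdf (pois ((N : ℝ) * μ)) k := by
    have hsplit : (fun j => if k < j then pois ((N : ℝ) * μ) j else 0)
        = (fun j => pois ((N : ℝ) * μ) j - (if k < j then 0 else pois ((N : ℝ) * μ) j)) := by
      funext j; split_ifs <;> simp
    rw [hsplit, Summable.tsum_sub (summable_pois _) hsum2, tsum_pois, htsum2]
  rw [hRHS]
  -- LHS
  rcases le_or_gt N k with hNk | hkN
  · have hL : ∑ j ∈ Finset.range (N + 1), (if k < j then binom p N j else 0) = 0 := by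
      apply Finset.sum_eq_zero
      intro j hj
      rw [if_neg]
      have := Finset.mem_range.mp hj
      omega
    rw [hL]
    have h1 := cdf_pois_le_one hlam k
    linarith
  · have hL : ∑ j ∈ Finset.range (N + 1), (if k < j then binom p N j else 0)
        = 1 - cdf (binom p N) k := by
      have e1 : ∀ j ∈ Finset.range (N + 1), (if k < j then binom p N j else 0)
          = binom p N j - (if k < j then 0 else binom p N j) := by
        intro j _; split_ifs <;> simp
      rw [Finset.sum_congr rfl e1, Finset.sum_sub_distrib, sum_binom_eq_one]
      congr 1
      have hsub : Finset.range (k + 1) ⊆ Finset.range (N + 1) :=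
        Finset.range_subset_range.mpr (by omega)
      rw [← Finset.sum_subset hsub (by
        intro j _ hj
        rw [if_pos]
        simpa using hj)]
      apply Finset.sum_congr rfl
      intro j hj
      rw [if_neg]
      simpa using Nat.lt_succ_iff.mp (Finset.mem_range.mp hj)
    rw [hL]
    have := cdf_pois_le_binom hp hp1 N k
    linarith
end

section
/- For fixed d ≥ 2 and v ∈ [v₀, v₁] with 1 < v₀, for all sufficiently large n there exist n₁ ∈ ℕ and u ∈ [v₀, v₁] with n = n₁ + ⌈u^{n₁}⌉ (the decomposition n = n₁ + u^{n₁} with u^{n₁} interpreted as a positive integer); moreover n₁ ≤ C log n for a constant C depending only on v₀. -/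
/-- Height decomposition: fix reals `1 < v₀ < v₁`. There is a constant `C > 0` depending
only on `v₀` such that for all sufficiently large `n`, there exist `n₁ ∈ ℕ` and
`u ∈ [v₀, v₁]` with `n = n₁ + u^{n₁}` (so that `u^{n₁} = n - n₁` is a positive integer),
and moreover `n₁ ≤ C log n`. -/
theorem height_decomposition (v₀ v₁ : ℝ) (h0 : 1 < v₀) (h01 : v₀ < v₁) :
    ∃ C : ℝ, 0 < C ∧ ∃ N : ℕ, ∀ n : ℕ, N ≤ n →
      ∃ (n₁ : ℕ) (u : ℝ), v₀ ≤ u ∧ u ≤ v₁ ∧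
        (n : ℝ) = (n₁ : ℝ) + u ^ n₁ ∧ (n₁ : ℝ) ≤ C * Real.log n := by
  classical
  have hv0 : (0:ℝ) < v₀ := lt_trans zero_lt_one h0
  have hlog : 0 < Real.log v₀ := Real.log_pos h0
  refine ⟨1 / Real.log v₀, by positivity, ?_⟩
  have hr : 1 < v₁ / v₀ := (one_lt_div hv0).2 h01
  obtain ⟨K, hK⟩ := Filter.eventually_atTop.1
    ((tendsto_pow_atTop_atTop_of_one_lt hr).eventually_ge_atTop (v₀ + 1))
  refine ⟨K + ⌈v₀ ^ K⌉₊, fun n hn => ?_⟩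
  set P : ℕ → Prop := fun k => k + ⌈v₀ ^ k⌉₊ ≤ n with hPdef
  set k := Nat.findGreatest P n with hkdef
  have hPK : P K := hn
  have hKn : K ≤ n := le_trans (Nat.le_add_right _ _) hn
  have hkK : K ≤ k := Nat.le_findGreatest hKn hPK
  have hPk : P k := Nat.findGreatest_spec hKn hPK
  have hceil1 : 1 ≤ ⌈v₀ ^ k⌉₊ := Nat.one_le_ceil_iff.2 (pow_pos hv0 k)
  have hkn : k + 1 ≤ n := le_trans (by omega) hPk
  have hnotP : ¬ P (k + 1) :=
    Nat.findGreatest_is_greatest (Nat.lt_succ_self k) hkn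
  have hgt : n < (k + 1) + ⌈v₀ ^ (k+1)⌉₊ := not_le.1 hnotP
  set m := n - k with hmdef
  have hkn' : k ≤ n := le_trans (Nat.le_add_right _ _) hPk
  have hnm : n = k + m := by omega
  have hceilm : ⌈v₀ ^ k⌉₊ ≤ m := by omega
  have hlo : v₀ ^ k ≤ (m:ℝ) :=
    le_trans (Nat.le_ceil _) (by exact_mod_cast hceilm)
  have hmle : m ≤ ⌈v₀ ^ (k+1)⌉₊ := by omega
  have hvk1 : (1:ℝ) ≤ v₀ ^ k := one_le_pow₀ (le_of_lt h0)
  have hpowsplit : v₁ ^ k = v₀ ^ k * (v₁ / v₀) ^ k := by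
    rw [← mul_pow, mul_div_cancel₀ _ (ne_of_gt hv0)]
  have hhi : (m:ℝ) ≤ v₁ ^ k := by
    have h1 : ((⌈v₀ ^ (k+1)⌉₊ : ℕ) : ℝ) < v₀ ^ (k+1) + 1 :=
      Nat.ceil_lt_add_one (le_of_lt (pow_pos hv0 _))
    have h2 : (m:ℝ) ≤ (⌈v₀ ^ (k+1)⌉₊ : ℝ) := by exact_mod_cast hmle
    have h3 : v₀ + 1 ≤ (v₁ / v₀) ^ k := hK k hkK
    have h4 : v₀ ^ (k+1) = v₀ ^ k * v₀ := by ring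
    nlinarith [pow_pos hv0 k]
  obtain ⟨u, hu, hu2⟩ := intermediate_value_Icc (le_of_lt h01)
    ((continuous_pow k).continuousOn) ⟨hlo, hhi⟩
  refine ⟨k, u, hu.1, hu.2, ?_, ?_⟩
  · have hu2' : u ^ k = (m:ℝ) := hu2
    rw [hu2', hnm]; push_cast; ring
  · have hmn : (m:ℝ) ≤ (n:ℝ) := by exact_mod_cast (by omega : m ≤ n)
    have hln : (k:ℝ) * Real.log v₀ ≤ Real.log n := by
      rw [← Real.log_pow]
      exact Real.log_le_log (pow_pos hv0 k) (le_trans hlo hmn)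
    rw [one_div, mul_comm, ← div_eq_mul_inv, le_div_iff₀ hlog]
    exact hln
end
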